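/- arXiv:2208.03490 — 2 statements merged into one kernel-verified Lean document; each statement's English description precedes it below -/
import Mathlib

section
/- Let B be a left cancellative left semi-brace such that G = Ker(λ|_E). Then for every e ∈ E, the conjugation map α_e : G → G, g ↦ e∘g∘e⁻, is an automorphism of the skew left brace (G,+,∘); in particular α_e(g₁ + g₂) = α_e(g₁) + α_e(g₂) for all g₁,g₂ ∈ G. -/
/-- A left cancellative left semi-brace: `(B,+)` is a left cancellative semigroup,
`(B,*)` is a group (the paper's `∘`, with neutral element `1`, the paper's `0`),
and `a * (b + c) = a * b + a * (a⁻¹ + c)`. -/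
class LeftSemiBrace (B : Type*) extends Add B, Group B where
  add_assoc' : ∀ a b c : B, a + b + c = a + (b + c)
  add_left_cancel' : ∀ a b c : B, a + b = a + c → b = c
  compat : ∀ a b c : B, a * (b + c) = a * b + a * (a⁻¹ + c)

namespace LSBAux

variable {B : Type*} [LeftSemiBrace B]

lemma aassoc (a b c : B) : a + b + c = a + (b + c) := LeftSemiBrace.add_assoc' a b c

lemma compat (a b c : B) : a * (b + c) = a * b + a * (a⁻¹ + c) := LeftSemiBrace.compat a b c

lemma one_add (x : B) : 1 + x = x := by
  have h := compat (1 : B) 1 x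
  simp only [one_mul, inv_one, mul_one] at h
  exact (LeftSemiBrace.add_left_cancel' 1 x (1 + x) h).symm

/-- `a*b = a + λ_a(b)`. -/
lemma mulF9 (a b : B) : a * b = a + a * (a⁻¹ + b) := by
  have h := compat a 1 b
  rwa [one_add, mul_one] at h

/-- `λ_{ab} = λ_a ∘ λ_b`. -/
lemma lam_comp (a b c : B) : (a * b) * ((a * b)⁻¹ + c) = a * (a⁻¹ + b * (b⁻¹ + c)) := by
  apply LeftSemiBrace.add_left_cancel' (a * b)
  rw [← mulF9 (a * b) c, mul_assoc, mulF9 b c, compat]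

/-- `λ_a` sends idempotents to idempotents. -/
lemma lam_idem (a f : B) (hf : f + f = f) :
    a * (a⁻¹ + f) + a * (a⁻¹ + f) = a * (a⁻¹ + f) := by
  have h := compat a (a⁻¹ + f) f
  rw [aassoc, hf] at h
  exact h.symm

/-- If `e` is an additive idempotent then `e⁻¹` is a left additive identity. -/
lemma inv_add (e : B) (he : e + e = e) (x : B) : e⁻¹ + x = x := by
  have h := mulF9 e⁻¹ e
  rw [inv_inv, he, inv_mul_cancel] at h
  calc e⁻¹ + x = e⁻¹ + (1 + x) := by rw [one_add]
    _ = (e⁻¹ + 1) + x := (aassoc ..).symm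
    _ = 1 + x := by rw [← h]
    _ = x := one_add x

end LSBAux

theorem stmt8 (B : Type*) [LeftSemiBrace B]
    (hG : {b : B | ∀ e : B, e + e = e → b * (b⁻¹ + e) = e} = {x : B | ∃ c : B, c + 1 = x}) :
    ∀ e : B, e + e = e →
      (∀ g : B, (∃ c : B, c + 1 = g) → ∃ c : B, c + 1 = e * g * e⁻¹) ∧
      (∀ g : B, (∃ c : B, c + 1 = g) → ∃ c : B, c + 1 = e⁻¹ * g * e) ∧
      (∀ g₁ g₂ : B, (∃ c : B, c + 1 = g₁) → (∃ c : B, c + 1 = g₂) →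
        e * (g₁ + g₂) * e⁻¹ = e * g₁ * e⁻¹ + e * g₂ * e⁻¹) ∧
      (∀ g₁ g₂ : B, e * (g₁ * g₂) * e⁻¹ = (e * g₁ * e⁻¹) * (e * g₂ * e⁻¹)) := by
  intro e he
  open LSBAux in
  -- elements of `G = B + 1` have `λ` fixing all idempotents
  have gfix : ∀ b : B, (∃ c : B, c + 1 = b) → ∀ f : B, f + f = f → b * (b⁻¹ + f) = f := by
    intro b hb f hf
    have hmem : b ∈ {b : B | ∀ e : B, e + e = e → b * (b⁻¹ + e) = e} := hG.ge hb
    exact hmem f hf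
  have hinv : ∀ x : B, e⁻¹ + x = x := inv_add e he
  have hee : e⁻¹ + e⁻¹ = e⁻¹ := hinv e⁻¹
  refine ⟨?_, ?_, ?_, ?_⟩
  · -- α_e maps G to G
    intro g hg
    have key : ∀ f : B, f + f = f → (e * g * e⁻¹) * ((e * g * e⁻¹)⁻¹ + f) = f := by
      intro f hf
      have hu : e⁻¹ * ((e⁻¹)⁻¹ + f) + e⁻¹ * ((e⁻¹)⁻¹ + f) = e⁻¹ * ((e⁻¹)⁻¹ + f) :=
        lam_idem e⁻¹ f hf
      calc (e * g * e⁻¹) * ((e * g * e⁻¹)⁻¹ + f)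
          = (e * g) * ((e * g)⁻¹ + e⁻¹ * ((e⁻¹)⁻¹ + f)) := lam_comp (e * g) e⁻¹ f
        _ = e * (e⁻¹ + g * (g⁻¹ + e⁻¹ * ((e⁻¹)⁻¹ + f))) := lam_comp e g _
        _ = e * (e⁻¹ + e⁻¹ * ((e⁻¹)⁻¹ + f)) := by rw [gfix g hg _ hu]
        _ = (e * e⁻¹) * ((e * e⁻¹)⁻¹ + f) := (lam_comp e e⁻¹ f).symm
        _ = f := by rw [mul_inv_cancel, inv_one, one_mul, one_add]
    exact hG.le key
  · -- α_{e⁻¹} maps G to G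
    intro g hg
    have key : ∀ f : B, f + f = f → (e⁻¹ * g * e) * ((e⁻¹ * g * e)⁻¹ + f) = f := by
      intro f hf
      have hu : e * (e⁻¹ + f) + e * (e⁻¹ + f) = e * (e⁻¹ + f) := lam_idem e f hf
      calc (e⁻¹ * g * e) * ((e⁻¹ * g * e)⁻¹ + f)
          = (e⁻¹ * g) * ((e⁻¹ * g)⁻¹ + e * (e⁻¹ + f)) := lam_comp (e⁻¹ * g) e f
        _ = e⁻¹ * ((e⁻¹)⁻¹ + g * (g⁻¹ + e * (e⁻¹ + f))) := lam_comp e⁻¹ g _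
        _ = e⁻¹ * ((e⁻¹)⁻¹ + e * (e⁻¹ + f)) := by rw [gfix g hg _ hu]
        _ = (e⁻¹ * e) * ((e⁻¹ * e)⁻¹ + f) := (lam_comp e⁻¹ e f).symm
        _ = f := by rw [inv_mul_cancel, inv_one, one_mul, one_add]
    exact hG.le key
  · -- additivity of α_e on G
    intro g₁ g₂ h₁ h₂
    have hs : ∃ c : B, c + 1 = g₁ + g₂ := by
      obtain ⟨c, hc⟩ := h₂
      exact ⟨g₁ + c, by rw [aassoc, hc]⟩
    have step : ∀ g : B, (∃ c : B, c + 1 = g) → e * g * e⁻¹ = e * g + 1 := by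
      intro g hg
      rw [mul_assoc, mulF9 g e⁻¹, gfix g hg e⁻¹ hee, compat e g e⁻¹, hee, mul_inv_cancel]
    rw [step (g₁ + g₂) hs, step g₁ h₁, step g₂ h₂, compat e g₁ g₂, hinv g₂,
      aassoc, aassoc, one_add]
  · -- multiplicativity of α_e
    intro g₁ g₂
    group
end

section
/- Let B be a left cancellative left semi-brace with |B| = pq, where p > q are primes, and suppose |E| > 1. Then either E is a normal subgroup of (B,∘) (hence an ideal), or G = Ker(λ|_E). -/
/-!
Since `|B| = |G|·|E|` and `|E| > 1`, either `p` divides `|E|`, so that `E` has index `1` or `q`,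
the smallest prime factor of `|B|`, and is therefore normal; or `|E| = q` and `|G| = p`.
In the latter case `B / Ker(λ|_E)` embeds into `Sym(E)`, whose order `q!` is prime to `p`,
so `p` divides `|Ker(λ|_E)|`; as `Ker(λ|_E) ≤ G` and `|G| = p`, the two coincide.
-/

theorem Nat.minFac_mul_of_lt {p q : ℕ} (hp : p.Prime) (hq : q.Prime) (hqp : q < p) :
    (p * q).minFac = q := by
  have hne : p * q ≠ 1 := fun h => hp.ne_one (Nat.eq_one_of_mul_eq_one_right h)
  have hle : (p * q).minFac ≤ q := Nat.minFac_le_of_dvd hq.two_le (dvd_mul_left q p)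
  rcases (Nat.minFac_prime hne).dvd_mul.1 (Nat.minFac_dvd _) with h | h
  · rw [(Nat.prime_dvd_prime_iff_eq (Nat.minFac_prime hne) hp).1 h] at hle
    omega
  · exact (Nat.prime_dvd_prime_iff_eq (Nat.minFac_prime hne) hq).1 h

theorem Nat.eq_and_eq_of_mul_eq_prime_mul_prime {a b p q : ℕ} (hp : p.Prime) (hq : q.Prime)
    (hab : a * b = p * q) (hpb : ¬ p ∣ b) (hb : b ≠ 1) : a = p ∧ b = q := by
  have hbq : b ∣ q := by
    refine (Nat.coprime_comm.1 (hp.coprime_iff_not_dvd.2 hpb)).dvd_of_dvd_mul_left ⟨a, ?_⟩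
    rw [← hab, mul_comm]
  have hb : b = q := ((Nat.dvd_prime hq).1 hbq).resolve_left hb
  subst hb
  exact ⟨Nat.eq_of_mul_eq_mul_right hq.pos hab, rfl⟩

theorem Subgroup.normal_of_prime_dvd_card {G : Type*} [Group G] {p q : ℕ} (hp : p.Prime)
    (hq : q.Prime) (hqp : q < p) (hG : Nat.card G = p * q) {H : Subgroup G}
    (hH : p ∣ Nat.card H) : H.Normal := by
  obtain ⟨k, hk⟩ := hH
  have hindex : H.index ∣ q := by
    have h := H.card_mul_index
    rw [hk, hG, mul_assoc] at h
    exact Dvd.intro_left k (Nat.eq_of_mul_eq_mul_left hp.pos h)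
  rcases (Nat.dvd_prime hq).1 hindex with h | h
  · exact Subgroup.normal_of_index_eq_one h
  · exact Subgroup.normal_of_index_eq_minFac_card (by rw [h, hG, Nat.minFac_mul_of_lt hp hq hqp])

theorem MonoidHom.prime_dvd_card_ker {G X : Type*} [Group G] [Finite X]
    (φ : G →* Equiv.Perm X) {p : ℕ} (hp : p.Prime) (hpG : p ∣ Nat.card G)
    (hX : Nat.card X < p) : p ∣ Nat.card φ.ker := by
  have hrange : Nat.card φ.range ∣ (Nat.card X).factorial :=
    Nat.card_perm (α := X) ▸ φ.range.card_subgroup_dvd_card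
  rw [← φ.ker.card_mul_index, Subgroup.index_ker] at hpG
  refine (hp.dvd_mul.1 hpG).resolve_right fun h => ?_
  exact absurd (hp.dvd_factorial.1 (h.trans hrange)) (not_le.2 hX)

namespace LeftSemiBrace

variable {B : Type*} [LeftSemiBrace B]

instance : AddSemigroup B where
  add_assoc := add_assoc'

instance : IsLeftCancelAdd B where
  add_left_cancel := add_left_cancel'

theorem one_add (c : B) : 1 + c = c := by
  have h := compat (1 : B) 1⁻¹ c
  simp only [inv_one, one_mul, mul_one] at h
  exact (add_left_cancel h).symm

/-- The paper's `λ_a(b)`. -/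
def lam (a b : B) : B := a * (a⁻¹ + b)

theorem lam_add (a b c : B) : lam a (b + c) = lam a b + lam a c := by
  rw [lam, lam, lam, ← add_assoc, compat a (a⁻¹ + b) c]

theorem lam_mul (a b c : B) : lam (a * b) c = lam a (lam b c) := by
  have h : b * (b⁻¹ * a⁻¹ + c) = a⁻¹ + lam b c := by
    rw [compat, mul_inv_cancel_left, lam]
  rw [lam, lam, mul_inv_rev, mul_assoc, h]

theorem lam_one (c : B) : lam 1 c = c := by
  rw [lam, inv_one, one_mul, one_add]

theorem lam_inv_lam (a b : B) : lam a⁻¹ (lam a b) = b := by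
  rw [← lam_mul, inv_mul_cancel, lam_one]

theorem lam_lam_inv (a b : B) : lam a (lam a⁻¹ b) = b := by
  simpa only [inv_inv] using lam_inv_lam a⁻¹ b

theorem lam_inv_eq_iff {a b c : B} : lam a⁻¹ b = c ↔ b = lam a c :=
  ⟨fun h => h ▸ (lam_lam_inv a b).symm, fun h => h ▸ lam_inv_lam a c⟩

theorem mul_eq_add_lam (a b : B) : a * b = a + lam a b := by
  conv_lhs => rw [← one_add b]
  rw [compat a 1 b, mul_one, lam]

theorem add_eq_mul_lam (a b : B) : a + b = a * lam a⁻¹ b := by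
  rw [mul_eq_add_lam, lam_lam_inv]

theorem add_one_eq_self_iff {a : B} : a + 1 = a ↔ lam a 1 = 1 := by
  rw [add_eq_mul_lam, mul_eq_left, lam_inv_eq_iff, eq_comm]

theorem exists_add_one_eq_iff {a : B} : (∃ c : B, c + 1 = a) ↔ lam a 1 = 1 := by
  refine ⟨?_, fun h => ⟨a, add_one_eq_self_iff.2 h⟩⟩
  rintro ⟨c, rfl⟩
  rw [← add_one_eq_self_iff, add_assoc, one_add]

section Idempotents

variable {e f : B}

theorem lam_idem (he : e + e = e) (a : B) : lam a e + lam a e = lam a e := by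
  rw [← lam_add, he]

theorem idem_add_one (he : e + e = e) : e + 1 = 1 :=
  add_left_cancel (a := e) (by rw [← add_assoc, he])

theorem lam_inv_one_of_idem (he : e + e = e) : lam e⁻¹ 1 = e⁻¹ := by
  rw [lam, inv_inv, idem_add_one he, mul_one]

theorem idem_inv (he : e + e = e) : e⁻¹ + e⁻¹ = e⁻¹ := by
  simpa only [lam_inv_one_of_idem he] using lam_idem (one_add (1 : B)) e⁻¹

theorem idem_add (he : e + e = e) (hf : f + f = f) : (e + f) + (e + f) = e + f := by
  have hfef : f + (e + f) = f := by
    have hf' : lam f⁻¹ f = 1 := by rw [lam, inv_inv, hf, inv_mul_cancel]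
    rw [add_eq_mul_lam f, lam_add, hf', idem_add_one (lam_idem he f⁻¹), mul_one]
  rw [add_assoc, hfef]

theorem idem_mul (he : e + e = e) (hf : f + f = f) : e * f + e * f = e * f := by
  rw [mul_eq_add_lam]
  exact idem_add he (lam_idem hf e)

end Idempotents

variable (B) in
def idempotents : Subgroup B where
  carrier := {e : B | e + e = e}
  one_mem' := one_add 1
  mul_mem' := idem_mul
  inv_mem' := idem_inv

variable (B) in
/-- The paper's `G = B + 0`. -/
def rangeAddOne : Subgroup B where
  carrier := {x : B | ∃ c : B, c + 1 = x}
  one_mem' := ⟨1, one_add 1⟩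
  mul_mem' {g h} hg hh := by
    simp only [Set.mem_ofPred_eq, exists_add_one_eq_iff] at hg hh ⊢
    rw [lam_mul, hh, hg]
  inv_mem' {g} hg := by
    simp only [Set.mem_ofPred_eq, exists_add_one_eq_iff] at hg ⊢
    rw [lam_inv_eq_iff, hg]

theorem mem_rangeAddOne_iff {a : B} : a ∈ rangeAddOne B ↔ lam a 1 = 1 :=
  exists_add_one_eq_iff

def rangeAddOneProdIdempotentsEquiv : rangeAddOne B × idempotents B ≃ B where
  toFun x := x.1 * x.2
  invFun a := (⟨a + 1, a, rfl⟩, ⟨(lam a⁻¹ 1)⁻¹, idem_inv (lam_idem (one_add 1) a⁻¹)⟩)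
  left_inv := by
    rintro ⟨⟨g, hg⟩, ⟨e, he⟩⟩
    have hg' : g + 1 = g := add_one_eq_self_iff.2 (mem_rangeAddOne_iff.1 hg)
    have hge : g * e + 1 = g := by
      rw [mul_eq_add_lam, add_assoc, idem_add_one (lam_idem he g), hg']
    have hinv : lam (g * e)⁻¹ 1 = e⁻¹ := by
      rw [mul_inv_rev, lam_mul, lam_inv_eq_iff.2 (mem_rangeAddOne_iff.1 hg).symm,
        lam_inv_one_of_idem he]
    ext <;> simp only [hge, hinv, inv_inv]
  right_inv a := by
    change (a + 1) * (lam a⁻¹ 1)⁻¹ = a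
    rw [add_eq_mul_lam, mul_inv_cancel_right]

theorem card_eq_card_rangeAddOne_mul_card_idempotents :
    Nat.card B = Nat.card (rangeAddOne B) * Nat.card (idempotents B) := by
  rw [← Nat.card_prod, Nat.card_congr rangeAddOneProdIdempotentsEquiv]

def lamIdempotents : B →* Equiv.Perm (idempotents B) where
  toFun a :=
    { toFun := fun e => ⟨lam a e, lam_idem e.2 a⟩
      invFun := fun e => ⟨lam a⁻¹ e, lam_idem e.2 a⁻¹⟩
      left_inv := fun e => Subtype.ext (lam_inv_lam a (e : B))
      right_inv := fun e => Subtype.ext (lam_lam_inv a (e : B)) }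
  map_one' := Equiv.ext fun e => Subtype.ext (lam_one (e : B))
  map_mul' a b := Equiv.ext fun e => Subtype.ext (lam_mul a b (e : B))

theorem mem_ker_lamIdempotents_iff {b : B} :
    b ∈ (lamIdempotents (B := B)).ker ↔ ∀ e : B, e + e = e → lam b e = e :=
  ⟨fun h e he => congrArg Subtype.val (Equiv.ext_iff.1 h ⟨e, he⟩),
    fun h => Equiv.ext fun e => Subtype.ext (h e e.2)⟩

theorem ker_lamIdempotents_le : (lamIdempotents (B := B)).ker ≤ rangeAddOne B :=
  fun _ hb => mem_rangeAddOne_iff.2 (mem_ker_lamIdempotents_iff.1 hb 1 (one_add 1))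

theorem ker_lamIdempotents_eq [Finite B] {p : ℕ} (hp : p.Prime)
    (hG : Nat.card (rangeAddOne B) = p) (hE : Nat.card (idempotents B) < p) :
    (lamIdempotents (B := B)).ker = rangeAddOne B := by
  have hpB : p ∣ Nat.card B := by
    rw [card_eq_card_rangeAddOne_mul_card_idempotents, hG]
    exact dvd_mul_right p _
  have hpker := lamIdempotents.prime_dvd_card_ker hp hpB hE
  exact Subgroup.eq_of_le_of_card_ge ker_lamIdempotents_le (hG ▸ Nat.le_of_dvd Nat.card_pos hpker)

end LeftSemiBrace

open LeftSemiBrace in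
/-- For a left cancellative left semi-brace of size `pq` with `p > q` primes and `|E| > 1`,
either `E` is a normal subgroup of `(B,∘)` (hence an ideal) or `G = Ker(λ|_E)`. -/
theorem stmt14 (B : Type*) [LeftSemiBrace B] (p q : ℕ) (hp : p.Prime) (hq : q.Prime)
    (hpq : q < p) (hcard : Nat.card B = p * q)
    (hE : 1 < Nat.card {e : B | e + e = e}) :
    (∃ H : Subgroup B, (H : Set B) = {e : B | e + e = e} ∧ H.Normal) ∨
    {b : B | ∀ e : B, e + e = e → b * (b⁻¹ + e) = e} = {x : B | ∃ c : B, c + 1 = x} := by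
  have : Finite B := Nat.finite_of_card_ne_zero (hcard ▸ (Nat.mul_pos hp.pos hq.pos).ne')
  by_cases hpE : p ∣ Nat.card (idempotents B)
  · exact Or.inl ⟨idempotents B, rfl, Subgroup.normal_of_prime_dvd_card hp hq hpq hcard hpE⟩
  obtain ⟨hG, hE⟩ : Nat.card (rangeAddOne B) = p ∧ Nat.card (idempotents B) = q :=
    Nat.eq_and_eq_of_mul_eq_prime_mul_prime hp hq
      (card_eq_card_rangeAddOne_mul_card_idempotents.symm.trans hcard) hpE hE.ne'
  have hker := ker_lamIdempotents_eq hp hG (hE ▸ hpq)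
  right
  ext b
  exact mem_ker_lamIdempotents_iff.symm.trans (SetLike.ext_iff.1 hker b)
end
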